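/- General models for CTT_uqe exist: there is a frame and interpretation satisfying all thirteen interpretation conditions on the logical constants together with the seven valuation clauses of a general model. -/

import Mathlib

set_option maxHeartbeats 1000000

namespace CTTuqe

/-- Types of CTT_uqe: base types (0 = o, 1 = ε, n+2 = individuals) and function types. -/
inductive Ty where
  | base : ℕ → Ty
  | arr : Ty → Ty → Ty
deriving DecidableEq

def oTy : Ty := .base 0
def epsTy : Ty := .base 1

/-- Names of constants, including the logical constants of CTT_uqe. -/
inductive CName where
  | eq | iota | isVar | isCon | appc | absc | condc | quo | sub | isFreeIn
  | isVarAt (a : Ty) | isConAt (a : Ty) | isExprAt (a : Ty)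
  | user (n : ℕ)
deriving DecidableEq

/-- Expressions of CTT_uqe. -/
inductive Expr where
  | var : ℕ → Ty → Expr
  | con : CName → Ty → Expr
  | app : Expr → Expr → Expr
  | abs : ℕ → Ty → Expr → Expr
  | cond : Expr → Expr → Expr → Expr
  | quot : Expr → Expr
  | eval : Expr → Expr → Expr
deriving DecidableEq

/-- Eval-free expressions. -/
def EvalFree : Expr → Prop
  | .var _ _ => True
  | .con _ _ => True
  | .app f x => EvalFree f ∧ EvalFree x
  | .abs _ _ b => EvalFree b
  | .cond a b c => EvalFree a ∧ EvalFree b ∧ EvalFree c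
  | .quot a => EvalFree a
  | .eval _ _ => False

/-- Typing judgement for expressions. -/
inductive HasType : Expr → Ty → Prop
  | var (n : ℕ) (a : Ty) : HasType (.var n a) a
  | con (c : CName) (a : Ty) : HasType (.con c a) a
  | app {f x : Expr} {a b : Ty} : HasType f (.arr a b) → HasType x a → HasType (.app f x) b
  | abs {n : ℕ} {a : Ty} {B : Expr} {b : Ty} : HasType B b → HasType (.abs n a B) (.arr a b)
  | cond {A B C : Expr} {a : Ty} : HasType A oTy → HasType B a → HasType C a →
      HasType (.cond A B C) a
  | quot {A : Expr} {a : Ty} : EvalFree A → HasType A a → HasType (.quot A) epsTy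
  | eval {A B : Expr} {b : Ty} : HasType A epsTy → HasType B b → HasType (.eval A B) b

def appC : Expr := .con .appc (epsTy.arr (epsTy.arr epsTy))
def absC : Expr := .con .absc (epsTy.arr (epsTy.arr epsTy))
def condC : Expr := .con .condc (epsTy.arr (epsTy.arr (epsTy.arr epsTy)))
def quoC : Expr := .con .quo (epsTy.arr epsTy)

/-- The mapping 𝓔 from eval-free expressions to expressions of type ε. -/
def E : Expr → Expr
  | .var n a => .quot (.var n a)
  | .con c a => .quot (.con c a)
  | .app f x => .app (.app appC (E f)) (E x)
  | .abs n a b => .app (.app absC (.quot (.var n a))) (E b)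
  | .cond a b c => .app (.app (.app condC (E a)) (E b)) (E c)
  | .quot a => .app quoC (E a)
  | .eval a b => .eval a b

/-- A construction is an expression in the range of 𝓔 (on eval-free expressions). -/
def IsConstruction (e : Expr) : Prop := ∃ A, EvalFree A ∧ E A = e

def Construction := {e : Expr // IsConstruction e}

/-- Free variables of an (eval-free) expression; quotation binds everything. -/
def freeVars : Expr → Finset (ℕ × Ty)
  | .var n a => {(n, a)}
  | .con _ _ => ∅
  | .app f x => freeVars f ∪ freeVars x
  | .abs n a b => freeVars b \ {(n, a)}
  | .cond a b c => freeVars a ∪ freeVars b ∪ freeVars c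
  | .quot _ => ∅
  | .eval a b => freeVars a ∪ freeVars b

/-- Free variables computed as if quotation did not bind anything. -/
def varsThroughQuot : Expr → Finset (ℕ × Ty)
  | .var n a => {(n, a)}
  | .con _ _ => ∅
  | .app f x => varsThroughQuot f ∪ varsThroughQuot x
  | .abs n a b => varsThroughQuot b \ {(n, a)}
  | .cond a b c => varsThroughQuot a ∪ varsThroughQuot b ∪ varsThroughQuot c
  | .quot a => varsThroughQuot a
  | .eval a b => varsThroughQuot a ∪ varsThroughQuot b

/-- All variables occurring in an expression (free or bound, through quotations). -/
def allVars : Expr → Finset (ℕ × Ty)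
  | .var n a => {(n, a)}
  | .con _ _ => ∅
  | .app f x => allVars f ∪ allVars x
  | .abs n a b => insert (n, a) (allVars b)
  | .cond a b c => allVars a ∪ allVars b ∪ allVars c
  | .quot a => allVars a
  | .eval a b => allVars a ∪ allVars b

/-- Immediate subexpression relation. -/
inductive DirectSub : Expr → Expr → Prop
  | appF {f x} : DirectSub f (.app f x)
  | appX {f x} : DirectSub x (.app f x)
  | absB {n a b} : DirectSub b (.abs n a b)
  | condA {a b c} : DirectSub a (.cond a b c)
  | condB {a b c} : DirectSub b (.cond a b c)
  | condC {a b c} : DirectSub c (.cond a b c)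
  | quotA {a} : DirectSub a (.quot a)
  | evalA {a b} : DirectSub a (.eval a b)
  | evalB {a b} : DirectSub b (.eval a b)

/-- Proper subexpression relation. -/
def ProperSub : Expr → Expr → Prop := Relation.TransGen DirectSub

/- Logical sugar (Table 3). -/
def eqC (a : Ty) : Expr := .con .eq (a.arr (a.arr oTy))
def eqE (a : Ty) (x y : Expr) : Expr := .app (.app (eqC a) x) y
def trueE : Expr := eqE (oTy.arr (oTy.arr oTy)) (eqC oTy) (eqC oTy)
def falseE : Expr := eqE (oTy.arr oTy) (.abs 0 oTy trueE) (.abs 0 oTy (.var 0 oTy))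
def forallE (n : ℕ) (a : Ty) (body : Expr) : Expr :=
  eqE (a.arr oTy) (.abs n a trueE) (.abs n a body)
def andE (x y : Expr) : Expr :=
  eqE ((oTy.arr (oTy.arr oTy)).arr oTy)
    (.abs 2 (oTy.arr (oTy.arr oTy)) (.app (.app (.var 2 (oTy.arr (oTy.arr oTy))) trueE) trueE))
    (.abs 2 (oTy.arr (oTy.arr oTy)) (.app (.app (.var 2 (oTy.arr (oTy.arr oTy))) x) y))
def impE (x y : Expr) : Expr := eqE oTy x (andE x y)
def notE (x : Expr) : Expr := eqE oTy falseE x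
def orE (x y : Expr) : Expr := notE (andE (notE x) (notE y))
def neqE (a : Ty) (x y : Expr) : Expr := notE (eqE a x y)
def existsE (n : ℕ) (a : Ty) (body : Expr) : Expr := notE (forallE n a (notE body))
def iotaC (a : Ty) : Expr := .con .iota ((a.arr oTy).arr a)
/-- The canonical undefined expression ⊥_α. -/
def bottom : Ty → Expr
  | .base 0 => falseE
  | a => .app (iotaC a) (.abs 0 a (neqE a (.var 0 a) (.var 0 a)))
/-- A↓ -/
def defdE (a : Ty) (x : Expr) : Expr := eqE a x x
/-- A ≃ B -/
def simeqE (a : Ty) (x y : Expr) : Expr := impE (orE (defdE a x) (defdE a y)) (eqE a x y)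
/-- p ⇀ q : λ f. ∀ x. (f x ≠ ⊥ ⊃ (p x ∧ q (f x))) -/
def arrowPred (p q : Expr) (a b : Ty) : Expr :=
  .abs 1 (a.arr b) (forallE 0 a (impE
    (neqE b (.app (.var 1 (a.arr b)) (.var 0 a)) (bottom b))
    (andE (.app p (.var 0 a)) (.app q (.app (.var 1 (a.arr b)) (.var 0 a))))))

/-- The (partial, junk-total) type of an expression. -/
def typeOf : Expr → Ty
  | .var _ a => a
  | .con _ a => a
  | .app f _ => match typeOf f with | .arr _ b => b | t => t
  | .abs _ a b => .arr a (typeOf b)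
  | .cond _ b _ => typeOf b
  | .quot _ => epsTy
  | .eval _ b => typeOf b

/-- τ maps a predicate of type α → o to the type α. -/
def tauOf (p : Expr) : Ty := match typeOf p with | .arr a _ => a | t => t

/- Languages and theories. -/
def TyInSets (bs : Set ℕ) : Ty → Prop
  | .base n => n ∈ bs
  | .arr a b => TyInSets bs a ∧ TyInSets bs b

def ExprInSets (bs : Set ℕ) (cs : Set (CName × Ty)) : Expr → Prop
  | .var _ a => TyInSets bs a
  | .con c a => (c, a) ∈ cs ∧ TyInSets bs a
  | .app f x => ExprInSets bs cs f ∧ ExprInSets bs cs x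
  | .abs _ a b => TyInSets bs a ∧ ExprInSets bs cs b
  | .cond a b c => ExprInSets bs cs a ∧ ExprInSets bs cs b ∧ ExprInSets bs cs c
  | .quot a => ExprInSets bs cs a
  | .eval a b => ExprInSets bs cs a ∧ ExprInSets bs cs b

/-- A theory of CTT_uqe. -/
structure Theory where
  bases : Set ℕ
  consts : Set (CName × Ty)
  axioms : Set Expr
  bases_o : 0 ∈ bases
  bases_eps : 1 ∈ bases
  axioms_lang : ∀ A ∈ axioms, ExprInSets bases consts A ∧ HasType A oTy

def Theory.InLang (T : Theory) (A : Expr) : Prop := ExprInSets T.bases T.consts A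

/- Semantics. -/

/-- The full domains over a choice U of sets of individuals. -/
def FullDom (U : ℕ → Type) : Ty → Type
  | .base 0 => Bool
  | .base 1 => Construction
  | .base (n+2) => U n
  | .arr a b => FullDom U a → Option (FullDom U b)

/-- A frame of CTT_uqe. -/
structure Frame (U : ℕ → Type) where
  dom : (a : Ty) → Set (FullDom U a)
  dom_o : dom (.base 0) = Set.univ
  dom_eps : dom (.base 1) = Set.univ
  dom_ind : ∀ n : ℕ, (dom (.base (n+2))).Nonempty
  fn_mem : ∀ (a b : Ty) (f : FullDom U (a.arr b)), f ∈ dom (a.arr b) →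
      ∀ x ∈ dom a, ∀ y, f x = some y → y ∈ dom b
  fn_total : ∀ (a : Ty) (f : FullDom U (a.arr (.base 0))), f ∈ dom (a.arr (.base 0)) →
      ∀ x ∈ dom a, (f x).isSome

/-- Assignments into a frame. -/
def Assn {U : ℕ → Type} (F : Frame U) := {φ : (n : ℕ) → (a : Ty) → FullDom U a // ∀ n a, φ n a ∈ F.dom a}

def Assn.upd {U : ℕ → Type} {F : Frame U} (φ : Assn F) (n : ℕ) (a : Ty) (d : FullDom U a)
    (hd : d ∈ F.dom a) : Assn F :=
  ⟨fun m b => if h : n = m ∧ a = b then h.2 ▸ d else φ.1 m b, by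
    intro m b
    by_cases h : n = m ∧ a = b
    · simp only [dif_pos h]
      have h2 := h.2
      subst h2
      exact hd
    · simp only [dif_neg h]
      exact φ.2 m b⟩

/-- An interpretation of CTT_uqe, with the thirteen conditions on logical constants. -/
structure Interp (U : ℕ → Type) where
  fr : Frame U
  I : (c : CName) → (a : Ty) → FullDom U a
  I_mem : ∀ c a, I c a ∈ fr.dom a
  eq_cond : ∀ (a : Ty), ∀ x ∈ fr.dom a, ∃ g, I .eq (a.arr (a.arr oTy)) x = some g ∧
      ∀ y ∈ fr.dom a, ∃ b : Bool, g y = some b ∧ (b = true ↔ x = y)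
  iota_cond : ∀ (a : Ty), a ≠ oTy → ∀ p ∈ fr.dom (a.arr oTy),
      (∀ d ∈ fr.dom a, (p d = some true ∧ ∀ d' ∈ fr.dom a, p d' = some true → d' = d) →
        I .iota ((a.arr oTy).arr a) p = some d) ∧
      ((¬ ∃ d ∈ fr.dom a, p d = some true ∧ ∀ d' ∈ fr.dom a, p d' = some true → d' = d) →
        I .iota ((a.arr oTy).arr a) p = none)
  isVar_cond : ∀ A : Construction, ∃ b : Bool, I .isVar (epsTy.arr oTy) A = some b ∧
      (b = true ↔ ∃ (n : ℕ) (a : Ty), A.1 = Expr.quot (.var n a))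
  isVarAt_cond : ∀ (a : Ty) (A : Construction), ∃ b : Bool, I (.isVarAt a) (epsTy.arr oTy) A = some b ∧
      (b = true ↔ ∃ n : ℕ, A.1 = Expr.quot (.var n a))
  isCon_cond : ∀ A : Construction, ∃ b : Bool, I .isCon (epsTy.arr oTy) A = some b ∧
      (b = true ↔ ∃ (c : CName) (a : Ty), A.1 = Expr.quot (.con c a))
  isConAt_cond : ∀ (a : Ty) (A : Construction), ∃ b : Bool, I (.isConAt a) (epsTy.arr oTy) A = some b ∧
      (b = true ↔ ∃ c : CName, A.1 = Expr.quot (.con c a))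
  app_cond : ∀ A B : Construction,
      ((∃ g C, I .appc (epsTy.arr (epsTy.arr epsTy)) A = some g ∧ g B = some C) ↔
        IsConstruction (Expr.app (Expr.app appC A.1) B.1)) ∧
      (∀ g C, I .appc (epsTy.arr (epsTy.arr epsTy)) A = some g → g B = some C →
        C.1 = Expr.app (Expr.app appC A.1) B.1)
  abs_cond : ∀ A B : Construction,
      ((∃ g C, I .absc (epsTy.arr (epsTy.arr epsTy)) A = some g ∧ g B = some C) ↔
        IsConstruction (Expr.app (Expr.app absC A.1) B.1)) ∧
      (∀ g C, I .absc (epsTy.arr (epsTy.arr epsTy)) A = some g → g B = some C →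
        C.1 = Expr.app (Expr.app absC A.1) B.1)
  cond_cond : ∀ A B C : Construction,
      ((∃ g h D, I .condc (epsTy.arr (epsTy.arr (epsTy.arr epsTy))) A = some g ∧ g B = some h ∧
          h C = some D) ↔
        IsConstruction (Expr.app (Expr.app (Expr.app condC A.1) B.1) C.1)) ∧
      (∀ g h D, I .condc (epsTy.arr (epsTy.arr (epsTy.arr epsTy))) A = some g → g B = some h →
        h C = some D → D.1 = Expr.app (Expr.app (Expr.app condC A.1) B.1) C.1)
  quo_cond : ∀ A : Construction, ∃ C : Construction, I .quo (epsTy.arr epsTy) A = some C ∧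
      C.1 = Expr.app quoC A.1
  isExprAt_cond : ∀ (a : Ty) (A : Construction), ∃ b : Bool,
      I (.isExprAt a) (epsTy.arr oTy) A = some b ∧
      (b = true ↔ ∃ B : Expr, EvalFree B ∧ HasType B a ∧ E B = A.1)
  sub_cond : ∀ A B : Construction, ∃ g b, I .sub (epsTy.arr (epsTy.arr oTy)) A = some g ∧
      g B = some b ∧ (b = true ↔ ProperSub A.1 B.1)
  isFreeIn_cond : ∀ A B : Construction, ∃ g b, I .isFreeIn (epsTy.arr (epsTy.arr oTy)) A = some g ∧
      g B = some b ∧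
      (b = true ↔ ∃ (n : ℕ) (a : Ty) (C : Expr), EvalFree C ∧ E C = B.1 ∧
        A.1 = Expr.quot (.var n a) ∧ (n, a) ∈ freeVars C)

/-- For type o, undefinedness falls back to falsehood. -/
def fallback (U : ℕ → Type) : (b : Ty) → Option (FullDom U b) → Option (FullDom U b)
  | .base 0, v => some (v.getD false)
  | _, v => v

/-- A general model of CTT_uqe: an interpretation with a valuation function
satisfying the seven valuation clauses. -/
structure GeneralModel (U : ℕ → Type) where
  intp : Interp U
  V : Assn intp.fr → Expr → (a : Ty) → Option (FullDom U a)
  V_mem : ∀ φ A a y, V φ A a = some y → y ∈ intp.fr.dom a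
  v_var : ∀ φ (n : ℕ) (a : Ty), V φ (.var n a) a = some (φ.1 n a)
  v_con : ∀ φ (c : CName) (a : Ty), V φ (.con c a) a = some (intp.I c a)
  v_app : ∀ φ (F X : Expr) (a b : Ty), HasType F (a.arr b) → HasType X a →
      V φ (.app F X) b =
        fallback U b ((V φ F (a.arr b)).bind fun f => (V φ X a).bind fun x => f x)
  v_abs : ∀ φ (n : ℕ) (a : Ty) (B : Expr) (b : Ty), HasType B b →
      ∃ f, V φ (.abs n a B) (a.arr b) = some f ∧
        ∀ d (hd : d ∈ intp.fr.dom a), f d = V (φ.upd n a d hd) B b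
  v_cond : ∀ φ (A B C : Expr) (a : Ty), HasType A oTy → HasType B a → HasType C a →
      V φ (.cond A B C) a = (V φ A oTy).bind (fun t => bif t then V φ B a else V φ C a)
  v_quot : ∀ φ (A : Expr) (h : EvalFree A), V φ (.quot A) epsTy = some ⟨E A, A, h, rfl⟩
  v_eval_pos : ∀ φ (A B : Expr) (b : Ty) (C : Construction) (D : Expr), EvalFree D →
      HasType D b → V φ A epsTy = some C → E D = C.1 → V φ (.eval A B) b = V φ D b
  v_eval_neg : ∀ φ (A B : Expr) (b : Ty),
      (¬ ∃ (C : Construction) (D : Expr), EvalFree D ∧ HasType D b ∧ V φ A epsTy = some C ∧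
        E D = C.1) →
      V φ (.eval A B) b = fallback U b none

/-- Validity in a general model. -/
def ValidInModel {U : ℕ → Type} (M : GeneralModel U) (A : Expr) : Prop :=
  ∀ φ : Assn M.intp.fr, M.V φ A oTy = some true

/-- M is a general model for the theory T. -/
def ModelOf {U : ℕ → Type} (T : Theory) (M : GeneralModel U) : Prop :=
  ∀ A ∈ T.axioms, ValidInModel M A

/-- Semantically closed: the value does not depend on the assignment, in any general model. -/
def SemClosedExpr (A : Expr) (a : Ty) : Prop :=
  ∀ (U : ℕ → Type) (M : GeneralModel U) (φ ψ : Assn M.intp.fr), M.V φ A a = M.V ψ A a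

/-- Semantically closed relative to a theory. -/
def SemClosedIn (T : Theory) (A : Expr) (a : Ty) : Prop :=
  ∀ (U : ℕ → Type) (M : GeneralModel U), ModelOf T M →
    ∀ φ ψ : Assn M.intp.fr, M.V φ A a = M.V ψ A a

/-- Validity in a theory. -/
def ValidInTheory (T : Theory) (A : Expr) : Prop :=
  ∀ (U : ℕ → Type) (M : GeneralModel U), ModelOf T M → ValidInModel M A

/-- A normal theory: all axioms are semantically closed. -/
def Theory.Normal (T : Theory) : Prop := ∀ A ∈ T.axioms, SemClosedExpr A oTy

/- Translations. -/

def tyTransAux (m : ℕ → Ty) : Ty → Ty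
  | .base 0 => .base 0
  | .base 1 => .base 1
  | .base (n+2) => m (n+2)
  | .arr a b => .arr (tyTransAux m a) (tyTransAux m b)

/-- A translation Φ = (μ, ν) from T₁ to T₂. -/
structure Translation (T₁ T₂ : Theory) where
  muT : ℕ → Ty
  muP : ℕ → Expr
  nuVar : ℕ × Ty → ℕ
  nuCon : CName × Ty → CName
  nuVar_inj : Function.Injective nuVar
  nuCon_inj : Function.Injective nuCon
  muT_lang : ∀ n, 2 ≤ n → TyInSets T₂.bases (muT n)
  muP_lang : ∀ n, 2 ≤ n → ExprInSets T₂.bases T₂.consts (muP n)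
  muP_type : ∀ n, 2 ≤ n → HasType (muP n) ((muT n).arr oTy)
  muP_closed : ∀ n, 2 ≤ n → SemClosedExpr (muP n) ((muT n).arr oTy)
  nuCon_mem : ∀ p ∈ T₁.consts, (nuCon p, tyTransAux muT p.2) ∈ T₂.consts

variable {T₁ T₂ : Theory}

def Translation.tyTrans (Φ : Translation T₁ T₂) : Ty → Ty := tyTransAux Φ.muT

/-- μ on base types (with μ(o), μ(ε) the trivially true predicates). -/
def Translation.muBase (Φ : Translation T₁ T₂) : ℕ → Expr
  | 0 => .abs 0 oTy trueE
  | 1 => .abs 0 epsTy trueE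
  | n+2 => Φ.muP (n+2)

/-- The canonical extension μ̄ of μ to all types. -/
def Translation.muBar (Φ : Translation T₁ T₂) : Ty → Expr
  | .base n => Φ.muBase n
  | .arr a b => arrowPred (Φ.muBar a) (Φ.muBar b) (Φ.tyTrans a) (Φ.tyTrans b)

/-- The canonical extension ν̄ of ν to all expressions. -/
def Translation.nuBar (Φ : Translation T₁ T₂) : Expr → Expr
  | .var n a => .var (Φ.nuVar (n, a)) (Φ.tyTrans a)
  | .con c a => .con (Φ.nuCon (c, a)) (Φ.tyTrans a)
  | .app f x => .app (Φ.nuBar f) (Φ.nuBar x)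
  | .abs n a b => .abs (Φ.nuVar (n, a)) (Φ.tyTrans a)
      (.cond ((Φ.muBar a).app (.var (Φ.nuVar (n, a)) (Φ.tyTrans a)))
        (Φ.nuBar b) (bottom (Φ.tyTrans (typeOf b))))
  | .cond a b c => .cond (Φ.nuBar a) (Φ.nuBar b) (Φ.nuBar c)
  | .quot a => .quot (Φ.nuBar a)
  | .eval a b => .eval (Φ.nuBar a) (Φ.nuBar b)

/-- Obligation 3 of a translation: the interpretation of equality. -/
def eqObligation (Φ : Translation T₁ T₂) (a : Ty) : Expr :=
  eqE ((Φ.tyTrans a).arr ((Φ.tyTrans a).arr oTy))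
    (.con (Φ.nuCon (.eq, a.arr (a.arr oTy))) ((Φ.tyTrans a).arr ((Φ.tyTrans a).arr oTy)))
    (.abs 0 (Φ.tyTrans a) (.abs 1 (Φ.tyTrans a)
      (.cond (andE ((Φ.muBar a).app (.var 0 (Φ.tyTrans a)))
                   ((Φ.muBar a).app (.var 1 (Φ.tyTrans a))))
        (eqE (Φ.tyTrans a) (.var 0 (Φ.tyTrans a)) (.var 1 (Φ.tyTrans a)))
        (bottom oTy))))

/-- Obligation 4 of a translation: the interpretation of definite description. -/
def iotaObligation (Φ : Translation T₁ T₂) (a : Ty) : Expr :=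
  eqE (((Φ.tyTrans a).arr oTy).arr (Φ.tyTrans a))
    (.con (Φ.nuCon (.iota, (a.arr oTy).arr a)) (((Φ.tyTrans a).arr oTy).arr (Φ.tyTrans a)))
    (.abs 0 ((Φ.tyTrans a).arr oTy)
      (.cond ((Φ.muBar (a.arr oTy)).app (.var 0 ((Φ.tyTrans a).arr oTy)))
        (.app (iotaC (Φ.tyTrans a)) (.var 0 ((Φ.tyTrans a).arr oTy)))
        (bottom (Φ.tyTrans a))))

/-- Obligations 5/6: ν(c) = c for syntactic logical constants. -/
def synConstObligation (Φ : Translation T₁ T₂) (c c' : CName) (t : Ty) : Expr :=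
  eqE t (.con (Φ.nuCon (c, t)) t) (.con c' t)

/-- The obligations of a translation Φ. -/
inductive Obligation (Φ : Translation T₁ T₂) : Expr → Prop
  | baseOb : ∀ n ∈ T₁.bases, Obligation Φ
      (existsE 0 (Φ.tyTrans (.base n)) ((Φ.muBase n).app (.var 0 (Φ.tyTrans (.base n)))))
  | constOb : ∀ p ∈ T₁.consts, Obligation Φ
      ((Φ.muBar p.2).app (.con (Φ.nuCon p) (Φ.tyTrans p.2)))
  | eqOb : ∀ a : Ty, TyInSets T₁.bases a → Obligation Φ (eqObligation Φ a)
  | iotaOb : ∀ a : Ty, TyInSets T₁.bases a → a ≠ oTy → Obligation Φ (iotaObligation Φ a)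
  | isVarOb : Obligation Φ (synConstObligation Φ .isVar .isVar (epsTy.arr oTy))
  | isConOb : Obligation Φ (synConstObligation Φ .isCon .isCon (epsTy.arr oTy))
  | appOb : Obligation Φ (synConstObligation Φ .appc .appc (epsTy.arr (epsTy.arr epsTy)))
  | absOb : Obligation Φ (synConstObligation Φ .absc .absc (epsTy.arr (epsTy.arr epsTy)))
  | condOb : Obligation Φ
      (synConstObligation Φ .condc .condc (epsTy.arr (epsTy.arr (epsTy.arr epsTy))))
  | quoOb : Obligation Φ (synConstObligation Φ .quo .quo (epsTy.arr epsTy))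
  | subOb : Obligation Φ (synConstObligation Φ .sub .sub (epsTy.arr (epsTy.arr oTy)))
  | isFreeInOb : Obligation Φ (synConstObligation Φ .isFreeIn .isFreeIn (epsTy.arr (epsTy.arr oTy)))
  | isVarAtOb : ∀ b : Ty, TyInSets T₁.bases b → Obligation Φ
      (synConstObligation Φ (.isVarAt b) (.isVarAt (Φ.tyTrans b)) (epsTy.arr oTy))
  | isConAtOb : ∀ b : Ty, TyInSets T₁.bases b → Obligation Φ
      (synConstObligation Φ (.isConAt b) (.isConAt (Φ.tyTrans b)) (epsTy.arr oTy))
  | isExprAtOb : ∀ b : Ty, TyInSets T₁.bases b → Obligation Φ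
      (synConstObligation Φ (.isExprAt b) (.isExprAt (Φ.tyTrans b)) (epsTy.arr oTy))
  | axOb : ∀ A ∈ T₁.axioms, Obligation Φ (Φ.nuBar A)

/-- A semantic morphism from T₁ to T₂. -/
def IsSemMorphism (Φ : Translation T₁ T₂) : Prop :=
  ∀ A : Expr, T₁.InLang A → HasType A oTy → SemClosedExpr A oTy →
    ValidInTheory T₁ A → ValidInTheory T₂ (Φ.nuBar A)

end CTTuqe

/-!
Take for `D_{α→β}` the partial functions sending `D_α` into `D_β` that are total when `β = o`, and
let each logical constant denote its intended value at the types the conditions speak about (an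
arbitrary element of the domain at all other types).

The valuation is a recursion on expressions except at `eval A B`, whose value is that of the
eval-free `D` with `𝓔 D = V(A)`, not a subexpression; `D` is unique because `𝓔` is injective on
eval-free expressions. As `D` is eval-free, two stages suffice: a valuation making every
evaluation undefined, then the final one, which calls the first at evaluation nodes. The two agree
on eval-free expressions, which gives the evaluation clause.
-/

namespace CTTuqe

open Function

lemma HasType.typeOf_eq {A : Expr} {a : Ty} (h : HasType A a) : typeOf A = a := by
  induction h with
  | app _ _ ihf => simp [typeOf, ihf]
  | abs _ ihB => simp [typeOf, ihB]
  | cond _ _ _ _ ihB => simpa [typeOf] using ihB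
  | eval _ _ _ ihB => simpa [typeOf] using ihB
  | _ => rfl

lemma E_injOn_evalFree {A B : Expr} (hA : EvalFree A) (hB : EvalFree B) (h : E A = E B) :
    A = B := by
  induction A generalizing B with
  | eval => exact hA.elim
  | _ =>
    cases B <;> simp_all [E, appC, absC, condC, quoC, EvalFree]
    all_goals aesop

open scoped Classical

noncomputable section

def decode (C : Construction) (t : Ty) : Option Expr :=
  if h : ∃ D, EvalFree D ∧ HasType D t ∧ E D = C.1 then some h.choose else none

lemma decode_eq_some {C : Construction} {t : Ty} {D : Expr} :
    decode C t = some D ↔ EvalFree D ∧ HasType D t ∧ E D = C.1 := by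
  unfold decode
  split_ifs with h
  · obtain ⟨hD₁, -, hE₁⟩ := h.choose_spec
    refine ⟨?_, fun hD => congrArg some (E_injOn_evalFree hD₁ hD.1 (hE₁.trans hD.2.2.symm))⟩
    rintro ⟨⟩
    exact h.choose_spec
  · exact ⟨fun h' => (by cases h'), fun hD => absurd ⟨D, hD⟩ h⟩

variable {U : ℕ → Type}

lemma arr_ne_oTy (a b : Ty) : Ty.arr a b ≠ oTy := by simp [oTy]

lemma fallback_of_ne_oTy {b : Ty} (hb : b ≠ oTy) (v : Option (FullDom U b)) :
    fallback U b v = v := by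
  match b, hb with
  | .base (_ + 1), _ => rfl
  | .arr _ _, _ => rfl

lemma fallback_oTy_isSome (v : Option (FullDom U oTy)) : (fallback U oTy v).isSome := rfl

def stdDom : (a : Ty) → Set (FullDom U a)
  | .base _ => Set.univ
  | .arr a b => {f | ∀ x ∈ stdDom a, (∀ y, f x = some y → y ∈ stdDom b) ∧ (b = oTy → (f x).isSome)}

lemma mem_stdDom_arr_of_total {a b : Ty} {f : FullDom U (a.arr b)}
    (h : ∀ x ∈ stdDom a, ∃ y ∈ stdDom b, f x = some y) : f ∈ stdDom (a.arr b) := by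
  intro x hx
  obtain ⟨y, hy, hfx⟩ := h x hx
  simp [hfx, hy]

lemma mem_stdDom_arr_of_ne_oTy {a b : Ty} (hb : b ≠ oTy) {f : FullDom U (a.arr b)}
    (h : ∀ x ∈ stdDom a, ∀ y, f x = some y → y ∈ stdDom b) : f ∈ stdDom (a.arr b) :=
  fun x hx => ⟨h x hx, fun h' => absurd h' hb⟩

lemma fallback_none_mem {b : Ty} {y : FullDom U b} (h : fallback U b none = some y) :
    y ∈ stdDom b := by
  by_cases hb : b = oTy
  · subst hb; exact Set.mem_univ y
  · rw [fallback_of_ne_oTy hb] at h; cases h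

def eqFn (a : Ty) : FullDom U (a.arr (a.arr oTy)) :=
  fun x => some fun y => some (decide (x = y))

def iotaFn (a : Ty) : FullDom U ((a.arr oTy).arr a) := fun p =>
  if h : ∃ d ∈ stdDom a, p d = some true ∧ ∀ d' ∈ stdDom a, p d' = some true → d' = d then
    some h.choose
  else fallback U a none

def boolPred (P : Construction → Prop) : FullDom U (epsTy.arr oTy) :=
  fun A : Construction => some (decide (P A))

def boolRel (R : Construction → Construction → Prop) : FullDom U (epsTy.arr (epsTy.arr oTy)) :=
  fun A : Construction => some fun B : Construction => some (decide (R A B))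

def toConstruction? (e : Expr) : Option Construction :=
  if h : IsConstruction e then some ⟨e, h⟩ else none

lemma toConstruction?_eq_some {e : Expr} {C : Construction} :
    toConstruction? e = some C ↔ C.1 = e := by
  unfold toConstruction?
  split_ifs with h
  · exact ⟨fun hC => by cases hC; rfl, fun hC => congrArg some (Subtype.ext hC.symm)⟩
  · simp only [false_iff]
    rintro rfl
    exact h C.2

lemma exists_toConstruction?_eq_some {e : Expr} :
    (∃ C, toConstruction? e = some C) ↔ IsConstruction e := by
  simp only [toConstruction?_eq_some]
  exact ⟨fun ⟨C, hC⟩ => hC ▸ C.2, fun h => ⟨⟨e, h⟩, rfl⟩⟩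

def partialConstr₂ (f : Expr → Expr → Expr) : FullDom U (epsTy.arr (epsTy.arr epsTy)) :=
  fun A : Construction => some fun B : Construction => toConstruction? (f A.1 B.1)

def partialConstr₃ (f : Expr → Expr → Expr → Expr) :
    FullDom U (epsTy.arr (epsTy.arr (epsTy.arr epsTy))) :=
  fun A : Construction => some fun B : Construction => some fun C : Construction =>
    toConstruction? (f A.1 B.1 C.1)

def quoteConstruction (A : Construction) : Construction :=
  ⟨.app quoC A.1, by
    obtain ⟨B, hB, hEB⟩ := A.2
    exact ⟨.quot B, hB, by rw [E, hEB]⟩⟩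

def quoteFn : FullDom U (epsTy.arr epsTy) := fun A : Construction => some (quoteConstruction A)

lemma eqFn_mem (a : Ty) : eqFn a ∈ stdDom (U := U) (a.arr (a.arr oTy)) :=
  mem_stdDom_arr_of_total fun _ _ =>
    ⟨_, mem_stdDom_arr_of_total fun _ _ => ⟨_, Set.mem_univ _, rfl⟩, rfl⟩

lemma iotaFn_mem (a : Ty) : iotaFn a ∈ stdDom (U := U) ((a.arr oTy).arr a) := by
  intro p _
  unfold iotaFn
  split_ifs with h
  · exact ⟨fun y hy => Option.some.inj hy ▸ h.choose_spec.1, fun _ => rfl⟩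
  · refine ⟨fun y hy => fallback_none_mem hy, ?_⟩
    rintro rfl
    exact fallback_oTy_isSome none

lemma boolPred_mem (P : Construction → Prop) : boolPred P ∈ stdDom (U := U) (epsTy.arr oTy) :=
  mem_stdDom_arr_of_total fun _ _ => ⟨_, Set.mem_univ _, rfl⟩

lemma boolRel_mem (R : Construction → Construction → Prop) :
    boolRel R ∈ stdDom (U := U) (epsTy.arr (epsTy.arr oTy)) :=
  mem_stdDom_arr_of_total fun _ _ =>
    ⟨_, mem_stdDom_arr_of_total fun _ _ => ⟨_, Set.mem_univ _, rfl⟩, rfl⟩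

lemma epsTy_ne_oTy : epsTy ≠ oTy := by simp [epsTy, oTy]

lemma partialConstr₂_mem (f : Expr → Expr → Expr) :
    partialConstr₂ f ∈ stdDom (U := U) (epsTy.arr (epsTy.arr epsTy)) :=
  mem_stdDom_arr_of_total fun _ _ =>
    ⟨_, mem_stdDom_arr_of_ne_oTy epsTy_ne_oTy fun _ _ _ _ => Set.mem_univ _, rfl⟩

lemma partialConstr₃_mem (f : Expr → Expr → Expr → Expr) :
    partialConstr₃ f ∈ stdDom (U := U) (epsTy.arr (epsTy.arr (epsTy.arr epsTy))) :=
  mem_stdDom_arr_of_total fun _ _ => ⟨_, mem_stdDom_arr_of_total fun _ _ =>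
    ⟨_, mem_stdDom_arr_of_ne_oTy epsTy_ne_oTy fun _ _ _ _ => Set.mem_univ _, rfl⟩, rfl⟩

lemma quoteFn_mem : quoteFn ∈ stdDom (U := U) (epsTy.arr epsTy) :=
  mem_stdDom_arr_of_total fun _ _ => ⟨_, Set.mem_univ _, rfl⟩

lemma iotaFn_of_unique {a : Ty} {p : FullDom U (a.arr oTy)} {d : FullDom U a} (hd : d ∈ stdDom a)
    (hp : p d = some true ∧ ∀ d' ∈ stdDom a, p d' = some true → d' = d) : iotaFn a p = some d := by
  have h : ∃ d ∈ stdDom a, p d = some true ∧ ∀ d' ∈ stdDom a, p d' = some true → d' = d :=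
    ⟨d, hd, hp⟩
  rw [iotaFn, dif_pos h]
  exact congrArg some (hp.2 _ h.choose_spec.1 h.choose_spec.2.1)

lemma iotaFn_of_not_unique {a : Ty} (ha : a ≠ oTy) {p : FullDom U (a.arr oTy)}
    (h : ¬∃ d ∈ stdDom a, p d = some true ∧ ∀ d' ∈ stdDom a, p d' = some true → d' = d) :
    iotaFn a p = none := by
  rw [iotaFn, dif_neg h, fallback_of_ne_oTy ha]

lemma boolPred_spec (P : Construction → Prop) (A : Construction) :
    ∃ b : Bool, boolPred (U := U) P A = some b ∧ (b = true ↔ P A) :=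
  ⟨_, rfl, decide_eq_true_iff⟩

lemma boolRel_spec (R : Construction → Construction → Prop) (A B : Construction) :
    ∃ g b, boolRel (U := U) R A = some g ∧ g B = some b ∧ (b = true ↔ R A B) :=
  ⟨_, _, rfl, rfl, decide_eq_true_iff⟩

lemma partialConstr₂_spec (f : Expr → Expr → Expr) (A B : Construction) :
    ((∃ g C, partialConstr₂ (U := U) f A = some g ∧ g B = some C) ↔ IsConstruction (f A.1 B.1)) ∧
      ∀ g C, partialConstr₂ (U := U) f A = some g → g B = some C → C.1 = f A.1 B.1 := by
  refine ⟨?_, ?_⟩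
  · rw [← exists_toConstruction?_eq_some]
    constructor
    · rintro ⟨_, C, ⟨⟩, hC⟩
      exact ⟨C, hC⟩
    · rintro ⟨C, hC⟩
      exact ⟨_, C, rfl, hC⟩
  · rintro g C ⟨⟩ hC
    exact toConstruction?_eq_some.1 hC

lemma partialConstr₃_spec (f : Expr → Expr → Expr → Expr) (A B C : Construction) :
    ((∃ g h D, partialConstr₃ (U := U) f A = some g ∧ g B = some h ∧ h C = some D) ↔
        IsConstruction (f A.1 B.1 C.1)) ∧
      ∀ g h D, partialConstr₃ (U := U) f A = some g → g B = some h → h C = some D →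
        D.1 = f A.1 B.1 C.1 := by
  refine ⟨?_, ?_⟩
  · rw [← exists_toConstruction?_eq_some]
    constructor
    · rintro ⟨_, _, D, ⟨⟩, ⟨⟩, hD⟩
      exact ⟨D, hD⟩
    · rintro ⟨D, hD⟩
      exact ⟨_, _, D, rfl, rfl, hD⟩
  · rintro g h D ⟨⟩ ⟨⟩ hD
    exact toConstruction?_eq_some.1 hD

section Standard

variable [∀ n, Nonempty (U n)]

def defaultVal : (a : Ty) → FullDom U a
  | .base 0 => false
  | .base 1 => (⟨E (.var 0 oTy), .var 0 oTy, trivial, rfl⟩ : Construction)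
  | .base (n + 2) => Classical.arbitrary (U n)
  | .arr _ b => fun _ => some (defaultVal b)

lemma defaultVal_mem : ∀ a, defaultVal a ∈ stdDom (U := U) a
  | .base _ => Set.mem_univ _
  | .arr _ b => mem_stdDom_arr_of_total fun _ _ => ⟨defaultVal b, defaultVal_mem b, rfl⟩

variable (U) in
def stdFrame : Frame U where
  dom := stdDom
  dom_o := rfl
  dom_eps := rfl
  dom_ind n := ⟨defaultVal (.base (n + 2)), Set.mem_univ _⟩
  fn_mem _ _ _ hf x hx := (hf x hx).1
  fn_total _ _ hf x hx := (hf x hx).2 rfl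

def extend {ι : Type} (pat : ι → Ty) (v : ∀ i, FullDom U (pat i)) (t : Ty) : FullDom U t :=
  if h : ∃ i, pat i = t then h.choose_spec ▸ v h.choose else defaultVal t

lemma extend_apply {ι : Type} {pat : ι → Ty} (hpat : Injective pat) (v : ∀ i, FullDom U (pat i))
    (i : ι) : extend pat v (pat i) = v i := by
  have key : ∀ j (e : pat j = pat i), e ▸ v j = v i := by
    intro j e
    obtain rfl := hpat e
    rfl
  rw [extend, dif_pos ⟨i, rfl⟩]
  exact key _ _

lemma extend_mem {ι : Type} {pat : ι → Ty} {v : ∀ i, FullDom U (pat i)}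
    (hv : ∀ i, v i ∈ stdDom (pat i)) (t : Ty) : extend pat v t ∈ stdDom t := by
  have key : ∀ i (e : pat i = t), e ▸ v i ∈ stdDom t := by
    rintro i rfl
    exact hv i
  unfold extend
  split_ifs
  · exact key _ _
  · exact defaultVal_mem t

def atType (t₀ : Ty) (v : FullDom U t₀) : (t : Ty) → FullDom U t :=
  extend (fun _ : Unit => t₀) fun _ => v

@[simp] lemma atType_self (t₀ : Ty) (v : FullDom U t₀) : atType t₀ v t₀ = v :=
  extend_apply (injective_of_subsingleton _) _ ()

lemma atType_mem {t₀ : Ty} {v : FullDom U t₀} (hv : v ∈ stdDom t₀) (t : Ty) :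
    atType t₀ v t ∈ stdDom t :=
  extend_mem (fun _ => hv) t

variable (U) in
def constVal : CName → (t : Ty) → FullDom U t
  | .eq => extend (fun a : Ty => a.arr (a.arr oTy)) eqFn
  | .iota => extend (fun a : Ty => (a.arr oTy).arr a) iotaFn
  | .isVar => atType _ (boolPred fun A => ∃ n a, A.1 = .quot (.var n a))
  | .isCon => atType _ (boolPred fun A => ∃ c a, A.1 = .quot (.con c a))
  | .isVarAt a => atType _ (boolPred fun A => ∃ n, A.1 = .quot (.var n a))
  | .isConAt a => atType _ (boolPred fun A => ∃ c, A.1 = .quot (.con c a))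
  | .isExprAt a => atType _ (boolPred fun A => ∃ B, EvalFree B ∧ HasType B a ∧ E B = A.1)
  | .appc => atType _ (partialConstr₂ fun A B => .app (.app appC A) B)
  | .absc => atType _ (partialConstr₂ fun A B => .app (.app absC A) B)
  | .condc => atType _ (partialConstr₃ fun A B C => .app (.app (.app condC A) B) C)
  | .quo => atType _ quoteFn
  | .sub => atType _ (boolRel fun A B => ProperSub A.1 B.1)
  | .isFreeIn => atType _ (boolRel fun A B =>
      ∃ n a C, EvalFree C ∧ E C = B.1 ∧ A.1 = .quot (.var n a) ∧ (n, a) ∈ freeVars C)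
  | .user _ => defaultVal

lemma constVal_mem (c : CName) (t : Ty) : constVal U c t ∈ stdDom t := by
  cases c
  case eq => exact extend_mem eqFn_mem t
  case iota => exact extend_mem iotaFn_mem t
  case appc | absc => exact atType_mem (partialConstr₂_mem _) t
  case condc => exact atType_mem (partialConstr₃_mem _) t
  case quo => exact atType_mem quoteFn_mem t
  case sub | isFreeIn => exact atType_mem (boolRel_mem _) t
  case user => exact defaultVal_mem t
  all_goals exact atType_mem (boolPred_mem _) t

lemma constVal_eq_arr (a : Ty) : constVal U .eq (a.arr (a.arr oTy)) = eqFn a :=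
  extend_apply (fun _ _ h => (Ty.arr.inj h).1) eqFn a

lemma constVal_iota (a : Ty) : constVal U .iota ((a.arr oTy).arr a) = iotaFn a :=
  extend_apply (fun _ _ h => (Ty.arr.inj h).2) iotaFn a

variable (U) in
def stdInterp : Interp U where
  fr := stdFrame U
  I := constVal U
  I_mem := constVal_mem
  eq_cond a x _ := by
    rw [constVal_eq_arr]
    exact ⟨_, rfl, fun y _ => ⟨_, rfl, decide_eq_true_iff⟩⟩
  iota_cond a ha p _ := by
    rw [constVal_iota]
    exact ⟨fun d hd hp => iotaFn_of_unique hd hp, iotaFn_of_not_unique ha⟩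
  isVar_cond := by simp only [constVal, atType_self]; exact boolPred_spec _
  isVarAt_cond a := by simp only [constVal, atType_self]; exact boolPred_spec _
  isCon_cond := by simp only [constVal, atType_self]; exact boolPred_spec _
  isConAt_cond a := by simp only [constVal, atType_self]; exact boolPred_spec _
  app_cond := by simp only [constVal, atType_self]; exact partialConstr₂_spec _
  abs_cond := by simp only [constVal, atType_self]; exact partialConstr₂_spec _
  cond_cond := by simp only [constVal, atType_self]; exact partialConstr₃_spec _
  quo_cond A := by simp only [constVal, atType_self]; exact ⟨_, rfl, rfl⟩
  isExprAt_cond a := by simp only [constVal, atType_self]; exact boolPred_spec _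
  sub_cond := by simp only [constVal, atType_self]; exact boolRel_spec _
  isFreeIn_cond := by simp only [constVal, atType_self]; exact boolRel_spec _

variable (U) in
abbrev ValuationFn := Assn (stdFrame U) → Expr → (t : Ty) → Option (FullDom U t)

/-- ValuationFn by structural recursion; at an evaluation node it calls `ev` on the decoded
expression, which is not a subexpression. -/
def valuationWith (ev : ValuationFn U) (φ : Assn (stdFrame U)) :
    Expr → (t : Ty) → Option (FullDom U t)
  | .var n b, t => if h : b = t then some (h ▸ φ.1 n b) else none
  | .con c b, t => if h : b = t then some (h ▸ constVal U c b) else none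
  | .app F X, t =>
    fallback U t ((valuationWith ev φ F ((typeOf X).arr t)).bind fun f =>
      (valuationWith ev φ X (typeOf X)).bind f)
  | .abs n c B, .arr a b =>
    if c = a ∧ HasType B b then
      some fun d => if hd : d ∈ stdDom a then valuationWith ev (φ.upd n a d hd) B b else none
    else none
  | .abs _ _ _, .base _ => none
  | .cond A B C, t => (valuationWith ev φ A oTy).bind fun v =>
    bif v then valuationWith ev φ B t else valuationWith ev φ C t
  | .quot A, .base 1 => if h : EvalFree A then some (⟨E A, A, h, rfl⟩ : Construction) else none
  | .quot _, _ => none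
  | .eval A _, t =>
    match (valuationWith ev φ A epsTy).bind (decode · t) with
    | some D => ev φ D t
    | none => fallback U t none

lemma valuationWith_app (ev : ValuationFn U) (φ : Assn (stdFrame U)) {F X : Expr} {a : Ty} (b : Ty)
    (hX : HasType X a) :
    valuationWith ev φ (.app F X) b =
      fallback U b ((valuationWith ev φ F (a.arr b)).bind fun f =>
        (valuationWith ev φ X a).bind f) := by
  rw [valuationWith, hX.typeOf_eq]

lemma valuationWith_eval_of_decode (ev : ValuationFn U) (φ : Assn (stdFrame U)) {A : Expr}
    (B : Expr) {t : Ty} {C : Construction} {D : Expr} (hA : valuationWith ev φ A epsTy = some C)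
    (hD : decode C t = some D) : valuationWith ev φ (.eval A B) t = ev φ D t := by
  rw [valuationWith, hA]
  change (match decode C t with | some D => ev φ D t | none => fallback U t none) = _
  rw [hD]

lemma valuationWith_eval_of_not_decode (ev : ValuationFn U) (φ : Assn (stdFrame U)) (A B : Expr)
    (t : Ty) (h : ¬∃ C D, valuationWith ev φ A epsTy = some C ∧ decode C t = some D) :
    valuationWith ev φ (.eval A B) t = fallback U t none := by
  rw [valuationWith]
  split
  · next D hD =>
    obtain ⟨C, hC, hdec⟩ := Option.bind_eq_some_iff.1 hD
    exact absurd ⟨C, D, hC, hdec⟩ h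
  · rfl

structure ValuationFn.IsSound (V : ValuationFn U) : Prop where
  mem : ∀ φ A t y, V φ A t = some y → y ∈ stdDom t
  isSome_oTy : ∀ φ A, HasType A oTy → (V φ A oTy).isSome

lemma bind_decode_eq_some {o : Option Construction} {t : Ty} {D : Expr} :
    o.bind (decode · t) = some D → EvalFree D ∧ HasType D t := by
  intro h
  obtain ⟨C, -, hC⟩ := Option.bind_eq_some_iff.1 h
  exact (decode_eq_some.1 hC).imp_right And.left

lemma valuationWith_isSome_oTy {ev : ValuationFn U}
    (hev : ∀ φ A, HasType A oTy → (ev φ A oTy).isSome) (φ : Assn (stdFrame U)) {A : Expr}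
    (hA : HasType A oTy) : (valuationWith ev φ A oTy).isSome := by
  induction A generalizing φ with
  | var | con => cases hA; simp [valuationWith]
  | app => exact fallback_oTy_isSome _
  | abs | quot => cases hA
  | cond A B C ihA ihB ihC =>
    cases hA with | cond hA hB hC =>
    obtain ⟨v, hv⟩ := Option.isSome_iff_exists.1 (ihA φ hA)
    rw [valuationWith, hv, Option.bind_some]
    cases v
    exacts [ihC φ hC, ihB φ hB]
  | eval A B =>
    rw [valuationWith]
    split
    · next D hD => exact hev φ D (bind_decode_eq_some hD).2
    · exact fallback_oTy_isSome none

lemma valuationWith_mem {ev : ValuationFn U} (hev : ev.IsSound) (φ : Assn (stdFrame U)) (A : Expr)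
    (t : Ty) (y : FullDom U t) (hy : valuationWith ev φ A t = some y) : y ∈ stdDom t := by
  induction A generalizing φ t with
  | var n b =>
    rw [valuationWith] at hy
    split_ifs at hy with h
    subst h; cases hy; exact φ.2 n b
  | con c b =>
    rw [valuationWith] at hy
    split_ifs at hy with h
    subst h; cases hy; exact constVal_mem c b
  | app F X ihF ihX =>
    cases t with
    | base n => exact Set.mem_univ y
    | arr a b =>
      rw [valuationWith, fallback_of_ne_oTy (arr_ne_oTy a b)] at hy
      obtain ⟨f, hf, hfy⟩ := Option.bind_eq_some_iff.1 hy
      obtain ⟨x, hx, hfx⟩ := Option.bind_eq_some_iff.1 hfy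
      exact (ihF φ _ f hf x (ihX φ _ x hx)).1 y hfx
  | abs n c B ihB =>
    cases t with
    | base m => cases hy
    | arr a b =>
      rw [valuationWith] at hy
      split_ifs at hy with h
      cases hy
      intro x hx
      simp only [dif_pos hx]
      refine ⟨fun z hz => ihB _ b z hz, ?_⟩
      rintro rfl
      exact valuationWith_isSome_oTy hev.isSome_oTy _ h.2
  | cond A B C ihA ihB ihC =>
    obtain ⟨v, -, hv⟩ := Option.bind_eq_some_iff.1 hy
    cases v
    exacts [ihC φ t y hv, ihB φ t y hv]
  | quot A =>
    cases t with
    | base n => exact Set.mem_univ y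
    | arr a b => cases hy
  | eval A B =>
    rw [valuationWith] at hy
    split at hy
    · exact hev.mem _ _ _ _ hy
    · exact fallback_none_mem hy

lemma ValuationFn.IsSound.valuationWith {ev : ValuationFn U} (hev : ev.IsSound) :
    ValuationFn.IsSound (valuationWith ev) :=
  ⟨valuationWith_mem hev, fun φ _ hA => valuationWith_isSome_oTy hev.isSome_oTy φ hA⟩

lemma valuationWith_congr_of_evalFree (ev ev' : ValuationFn U) (φ : Assn (stdFrame U)) {A : Expr}
    (hA : EvalFree A) (t : Ty) : valuationWith ev φ A t = valuationWith ev' φ A t := by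
  induction A generalizing φ t with
  | var | con => rfl
  | app F X ihF ihX => simp only [valuationWith, ihF _ hA.1, ihX _ hA.2]
  | abs n c B ihB =>
    cases t with
    | base => rfl
    | arr a b => simp only [valuationWith, ihB _ hA]
  | cond A B C ihA ihB ihC => simp only [valuationWith, ihA _ hA.1, ihB _ hA.2.1, ihC _ hA.2.2]
  | quot =>
    match t with
    | .base 0 | .base 1 | .base (_ + 2) | .arr _ _ => rfl
  | eval => exact hA.elim

variable (U) in
def evalFreeValuation : ValuationFn U := valuationWith fun _ _ t => fallback U t none

variable (U) in
def stdValuation : ValuationFn U := valuationWith (evalFreeValuation U)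

lemma evalFreeValuation_isSound : (evalFreeValuation U).IsSound :=
  ValuationFn.IsSound.valuationWith (ev := fun _ _ t => fallback U t none)
    ⟨fun _ _ _ _ h => fallback_none_mem h, fun _ _ _ => fallback_oTy_isSome none⟩

lemma stdValuation_isSound : (stdValuation U).IsSound :=
  evalFreeValuation_isSound.valuationWith

variable (U) in
def stdModel : GeneralModel U where
  intp := stdInterp U
  V := stdValuation U
  V_mem := stdValuation_isSound.mem
  v_var _ _ _ := dif_pos rfl
  v_con _ _ _ := dif_pos rfl
  v_app φ _ _ _ b _ hX := valuationWith_app _ φ b hX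
  v_abs _ _ _ _ _ hB := ⟨_, if_pos ⟨rfl, hB⟩, fun _ hd => dif_pos hd⟩
  v_cond _ _ _ _ _ _ _ _ := rfl
  v_quot _ _ h := dif_pos h
  v_eval_pos φ _ B b _ _ hD hTD hA hED :=
    (valuationWith_eval_of_decode _ φ B hA (decode_eq_some.2 ⟨hD, hTD, hED⟩)).trans
      (valuationWith_congr_of_evalFree _ _ φ hD b)
  v_eval_neg φ A B b hne := valuationWith_eval_of_not_decode _ φ A B b fun ⟨C, D, hC, hdec⟩ =>
    have ⟨hD, hTD, hED⟩ := decode_eq_some.1 hdec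
    hne ⟨C, D, hD, hTD, hC, hED⟩

end Standard

end

/-- General models for CTT_uqe exist: there is a frame and interpretation
satisfying the thirteen interpretation conditions on the logical constants together with
the seven valuation clauses of a general model. -/
theorem general_models_exist : ∃ U : ℕ → Type, Nonempty (GeneralModel U) :=
  ⟨fun _ => PUnit, ⟨stdModel _⟩⟩

end CTTuqe
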